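/- arXiv:2010.10735 — 3 statements merged into one kernel-verified Lean document; each statement's English description precedes it below -/
import Mathlib

section
/- Let X be a geodesic metric space that is δ-hyperbolic with δ > 0, let C ⊆ X be a ρ-separated subset with ρ ≥ 20δ, and fix R with 2 + 2δ ≤ R ≤ ρ/2 − 3δ. Then for any two distinct points p, a ∈ C, the set π_p(a) has diameter at most 4δ in the path metric of X ∖ B_R(p). In particular, axiom (P1) holds for the projection distances {d_p}_{p∈C} with any projection constant θ ≥ 4δ. -/
/-!
Two points of `π_p(a)` are `γ₁ R` and `γ₂ R` for geodesics `γ₁, γ₂` from `p` to `a`; separation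
gives `d(p, a) ≥ R + δ`. Moving out by `δ` along each geodesic reaches points `u, v` which are
`δ`-close by thinness of the bigon `γ₁, γ₂`, and a geodesic from `u` to `v` stays at distance
`≥ R + δ - δ = R` from `p`. This gives a path of length at most `3δ` outside `B_R(p)`.
-/

open Set

/-- A geodesic from `x` to `y`: an isometric embedding of `[0, dist x y]` with the
prescribed endpoints. -/
def IsGeodesicFrom {X : Type*} [MetricSpace X] (γ : ℝ → X) (x y : X) : Prop :=
  γ 0 = x ∧ γ (dist x y) = y ∧
    ∀ s ∈ Icc (0:ℝ) (dist x y), ∀ t ∈ Icc (0:ℝ) (dist x y), dist (γ s) (γ t) = |s - t|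

/-- A geodesic metric space: every pair of points is joined by a geodesic. -/
def GeodesicMetricSpace (X : Type*) [MetricSpace X] : Prop :=
  ∀ x y : X, ∃ γ : ℝ → X, IsGeodesicFrom γ x y

/-- The Gromov product `(b,c)_a`. -/
noncomputable def gromovProd {X : Type*} [MetricSpace X] (a b c : X) : ℝ :=
  (dist a b + dist a c - dist b c) / 2

/-- `δ`-hyperbolicity via `δ`-thin triangles: two sides of a geodesic triangle issuing from a
common vertex stay `δ`-close up to the Gromov product (this is exactly the condition that
pairs of points of the triangle with the same image in the comparison tripod are `δ`-close). -/
def DeltaThin (X : Type*) [MetricSpace X] (δ : ℝ) : Prop :=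
  ∀ (a b c : X) (γ₁ γ₂ : ℝ → X), IsGeodesicFrom γ₁ a b → IsGeodesicFrom γ₂ a c →
    ∀ t ∈ Icc (0:ℝ) (gromovProd a b c), dist (γ₁ t) (γ₂ t) ≤ δ

/-- A subset `C` is `ρ`-separated if distinct points of `C` are at distance at least `ρ`. -/
def Separated {X : Type*} [MetricSpace X] (C : Set X) (ρ : ℝ) : Prop :=
  ∀ c ∈ C, ∀ c' ∈ C, c ≠ c' → ρ ≤ dist c c'

open scoped ENNReal

/-- The path metric of `X ∖ B_R(p)`: the distance from `u` to `v` is the infimum of the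
lengths (total variations) of continuous paths from `u` to `v` avoiding the open ball
`B_R(p)`, and `∞` if there is no such path. -/
noncomputable def pathDist {X : Type*} [MetricSpace X] (p : X) (R : ℝ) (u v : X) : ℝ≥0∞ :=
  ⨅ γ ∈ {γ : ℝ → X | ContinuousOn γ (Icc 0 1) ∧ γ 0 = u ∧ γ 1 = v ∧
      ∀ t ∈ Icc (0:ℝ) 1, R ≤ dist (γ t) p},
    eVariationOn γ (Icc (0:ℝ) 1)

/-- The projection `π_p(a)`: the set of points in which geodesics from `p` to `a` meet the
sphere `S_p = ∂B_R(p)`. -/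
def projSet {X : Type*} [MetricSpace X] (p : X) (R : ℝ) (a : X) : Set X :=
  {x : X | dist x p = R ∧
    ∃ γ : ℝ → X, IsGeodesicFrom γ p a ∧ ∃ t ∈ Icc (0:ℝ) (dist p a), γ t = x}

/-- The projection distance `d_p(a,b) = diam(π_p(a) ∪ π_p(b))`, the diameter being taken in
the path metric of `X ∖ B_R(p)`. -/
noncomputable def projDist {X : Type*} [MetricSpace X] (p : X) (R : ℝ) (a b : X) : ℝ≥0∞ :=
  ⨆ x ∈ projSet p R a ∪ projSet p R b, ⨆ y ∈ projSet p R a ∪ projSet p R b,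
    pathDist p R x y

open scoped NNReal

namespace IsGeodesicFrom

variable {X : Type*} [MetricSpace X] {γ : ℝ → X} {x y : X} {s t : ℝ}

lemma dist_eq (h : IsGeodesicFrom γ x y) (hs : s ∈ Icc 0 (dist x y)) (ht : t ∈ Icc 0 (dist x y)) :
    dist (γ s) (γ t) = |s - t| :=
  h.2.2 s hs t ht

lemma dist_left (h : IsGeodesicFrom γ x y) (hs : s ∈ Icc 0 (dist x y)) : dist (γ s) x = s := by
  simpa [h.1, abs_of_nonneg hs.1] using h.dist_eq hs ⟨le_rfl, dist_nonneg⟩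

lemma lipschitzOnWith (h : IsGeodesicFrom γ x y) : LipschitzOnWith 1 γ (Icc 0 (dist x y)) :=
  LipschitzOnWith.of_dist_le_mul fun s hs t ht => by
    rw [h.dist_eq hs ht, NNReal.coe_one, one_mul, Real.dist_eq]

end IsGeodesicFrom

lemma LipschitzOnWith.eVariationOn_Icc_le {X : Type*} [PseudoEMetricSpace X] {f : ℝ → X}
    {K : ℝ≥0} {a b : ℝ} (hf : LipschitzOnWith K f (Icc a b)) :
    eVariationOn f (Icc a b) ≤ K * ENNReal.ofReal (b - a) := by
  rcases le_total a b with hab | hba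
  · have hid := (monotone_id (α := ℝ)).monotoneOn (Icc a b) |>.eVariationOn_eq
      (left_mem_Icc.2 hab) (right_mem_Icc.2 hab)
    rw [inter_self] at hid
    exact (hf.comp_eVariationOn_le (mapsTo_id _)).trans_eq (by rw [hid]; rfl)
  · simp [eVariationOn.subsingleton f (subsingleton_Icc_of_ge hba)]

section PathDist

variable {X : Type*} [MetricSpace X] {p : X} {R : ℝ}

lemma pathDist_le_eVariationOn {f : ℝ → X} {a b : ℝ} (hab : a ≤ b)
    (hf : ContinuousOn f (Icc a b)) (hR : ∀ t ∈ Icc a b, R ≤ dist (f t) p) :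
    pathDist p R (f a) (f b) ≤ eVariationOn f (Icc a b) := by
  set φ : ℝ → ℝ := fun t => a + (b - a) * t
  have hφ : MapsTo φ (Icc 0 1) (Icc a b) := fun t ht =>
    ⟨by nlinarith [ht.1], by nlinarith [ht.2]⟩
  have hmono : MonotoneOn φ (Icc 0 1) := fun s _ t _ hst =>
    add_le_add_right (mul_le_mul_of_nonneg_left hst (sub_nonneg.2 hab)) a
  calc pathDist p R (f a) (f b) ≤ eVariationOn (f ∘ φ) (Icc 0 1) :=
        iInf₂_le _ ⟨hf.comp (by fun_prop) hφ, by simp [φ], by simp [φ],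
          fun t ht => hR _ (hφ ht)⟩
    _ = eVariationOn f (φ '' Icc 0 1) := eVariationOn.comp_eq_of_monotoneOn f φ hmono
    _ ≤ eVariationOn f (Icc a b) := eVariationOn.mono f hφ.image_subset

lemma pathDist_le_of_lipschitzOnWith {f : ℝ → X} {K : ℝ≥0} {a b : ℝ} (hab : a ≤ b)
    (hf : LipschitzOnWith K f (Icc a b)) (hR : ∀ t ∈ Icc a b, R ≤ dist (f t) p) :
    pathDist p R (f a) (f b) ≤ K * ENNReal.ofReal (b - a) :=
  (pathDist_le_eVariationOn hab hf.continuousOn hR).trans hf.eVariationOn_Icc_le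

lemma pathDist_comm_le (u v : X) : pathDist p R v u ≤ pathDist p R u v := by
  refine le_iInf₂ fun f ⟨hfc, hf0, hf1, hfR⟩ => ?_
  have hψ : MapsTo (fun t : ℝ => 1 - t) (Icc 0 1) (Icc 0 1) := fun t ht =>
    ⟨by linarith [ht.2], by linarith [ht.1]⟩
  have hanti : AntitoneOn (fun t : ℝ => 1 - t) (Icc 0 1) := fun s _ t _ hst =>
    sub_le_sub_left hst 1
  calc pathDist p R v u ≤ eVariationOn (f ∘ fun t => 1 - t) (Icc 0 1) :=
        iInf₂_le _ ⟨hfc.comp (by fun_prop) hψ, by simpa using hf1, by simpa using hf0,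
          fun t ht => hfR _ (hψ ht)⟩
    _ = eVariationOn f ((fun t : ℝ => 1 - t) '' Icc 0 1) :=
        eVariationOn.comp_eq_of_antitoneOn f _ hanti
    _ ≤ eVariationOn f (Icc 0 1) := eVariationOn.mono f hψ.image_subset

lemma pathDist_comm (u v : X) : pathDist p R u v = pathDist p R v u :=
  le_antisymm (pathDist_comm_le v u) (pathDist_comm_le u v)

lemma pathDist_triangle (u v w : X) :
    pathDist p R u w ≤ pathDist p R u v + pathDist p R v w := by
  simp only [pathDist, ENNReal.iInf_add, ENNReal.add_iInf]
  refine le_iInf₂ fun g ⟨hgc, hg0, hg1, hgR⟩ => le_iInf₂ fun f ⟨hfc, hf0, hf1, hfR⟩ => ?_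
  set h : ℝ → X := fun t => if t ≤ 1 then f t else g (t - 1)
  have hf : EqOn h f (Icc 0 1) := fun t ht => if_pos ht.2
  have hg : EqOn h (g ∘ fun t => t - 1) (Icc 1 2) := fun t ht => by
    rcases ht.1.eq_or_lt with rfl | h1
    · simp [h, hf1, hg0]
    · simp [h, not_le.2 h1]
  have hshift : MapsTo (fun t : ℝ => t - 1) (Icc 1 2) (Icc 0 1) := fun t ht =>
    ⟨by linarith [ht.1], by linarith [ht.2]⟩
  have hcont : ContinuousOn h (Icc 0 2) := by
    rw [← Icc_union_Icc_eq_Icc zero_le_one one_le_two]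
    exact (hfc.congr hf).union_of_isClosed ((hgc.comp (by fun_prop) hshift).congr hg)
      isClosed_Icc isClosed_Icc
  have hR : ∀ t ∈ Icc (0:ℝ) 2, R ≤ dist (h t) p := fun t ht => by
    rcases le_total t 1 with h1 | h1
    · rw [hf ⟨ht.1, h1⟩]; exact hfR t ⟨ht.1, h1⟩
    · rw [hg ⟨h1, ht.2⟩]; exact hgR _ (hshift ⟨h1, ht.2⟩)
  have hvar : eVariationOn h (Icc 0 2) = eVariationOn f (Icc 0 1) + eVariationOn g (Icc 0 1) := by
    have := eVariationOn.Icc_add_Icc h zero_le_one one_le_two (mem_univ (1:ℝ))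
    simp only [univ_inter] at this
    rw [← this, eVariationOn.eq_of_eqOn hf, eVariationOn.eq_of_eqOn hg,
      eVariationOn.comp_eq_of_monotoneOn g _ (fun s _ t _ hst => sub_le_sub_right hst 1)]
    norm_num
  have h0 : h 0 = u := by simp [h, hf0]
  have h2 : h 2 = w := by norm_num [h, hg1]
  calc pathDist p R u w = pathDist p R (h 0) (h 2) := by rw [h0, h2]
    _ ≤ _ := pathDist_le_eVariationOn zero_le_two hcont hR
    _ = _ := hvar

end PathDist

section Projection

variable {X : Type*} [MetricSpace X] {p : X} {R : ℝ}

lemma IsGeodesicFrom.pathDist_le {γ : ℝ → X} {x y : X} (hγ : IsGeodesicFrom γ x y) {s t : ℝ}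
    (hs : 0 ≤ s) (hst : s ≤ t) (ht : t ≤ dist x y) (hR : ∀ r ∈ Icc s t, R ≤ dist (γ r) p) :
    pathDist p R (γ s) (γ t) ≤ ENNReal.ofReal (t - s) := by
  simpa using pathDist_le_of_lipschitzOnWith hst
    (hγ.lipschitzOnWith.mono (Icc_subset_Icc hs ht)) hR

lemma exists_geodesic_of_mem_projSet {a x : X} (hx : x ∈ projSet p R a) :
    ∃ γ, IsGeodesicFrom γ p a ∧ R ∈ Icc 0 (dist p a) ∧ γ R = x := by
  obtain ⟨hxp, γ, hγ, t, ht, rfl⟩ := hx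
  rw [hγ.dist_left ht] at hxp
  exact ⟨γ, hγ, hxp ▸ ht, hxp ▸ rfl⟩

lemma pathDist_le_of_mem_projSet {δ : ℝ} (hgeo : GeodesicMetricSpace X) (hthin : DeltaThin X δ)
    (hδ : 0 ≤ δ) {a x y : X} (ha : R + δ ≤ dist p a) (hx : x ∈ projSet p R a)
    (hy : y ∈ projSet p R a) :
    pathDist p R x y ≤ ENNReal.ofReal (3 * δ) := by
  obtain ⟨γ₁, hγ₁, hR, rfl⟩ := exists_geodesic_of_mem_projSet hx
  obtain ⟨γ₂, hγ₂, -, rfl⟩ := exists_geodesic_of_mem_projSet hy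
  have hRδ : R + δ ∈ Icc 0 (dist p a) := ⟨by linarith [hR.1], ha⟩
  have hradial {γ : ℝ → X} (hγ : IsGeodesicFrom γ p a) :
      pathDist p R (γ R) (γ (R + δ)) ≤ ENNReal.ofReal δ := by
    simpa using hγ.pathDist_le hR.1 (by linarith) ha fun r hr =>
      hr.1.trans (hγ.dist_left ⟨hR.1.trans hr.1, hr.2.trans ha⟩).ge
  set u := γ₁ (R + δ)
  set v := γ₂ (R + δ)
  -- thinness of the bigon `γ₁, γ₂`, a triangle with `(a, a)_p = dist p a`
  have huv : dist u v ≤ δ :=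
    hthin p a a γ₁ γ₂ hγ₁ hγ₂ (R + δ) (by simpa [gromovProd] using hRδ)
  obtain ⟨σ, hσ⟩ := hgeo u v
  have hbridge : pathDist p R u v ≤ ENNReal.ofReal δ := by
    have hup : dist u p = R + δ := hγ₁.dist_left hRδ
    have := hσ.pathDist_le (p := p) (R := R) le_rfl dist_nonneg le_rfl fun r hr => by
      linarith [dist_triangle u (σ r) p, hσ.dist_left hr, dist_comm u (σ r), hr.2]
    rw [hσ.1, hσ.2.1, sub_zero] at this
    exact this.trans (ENNReal.ofReal_le_ofReal huv)
  calc pathDist p R (γ₁ R) (γ₂ R)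
      ≤ pathDist p R (γ₁ R) u + (pathDist p R u v + pathDist p R v (γ₂ R)) :=
        (pathDist_triangle _ u _).trans (by gcongr; exact pathDist_triangle _ v _)
    _ ≤ ENNReal.ofReal δ + (ENNReal.ofReal δ + ENNReal.ofReal δ) :=
        add_le_add (hradial hγ₁) (add_le_add hbridge ((pathDist_comm v _).trans_le (hradial hγ₂)))
    _ = ENNReal.ofReal (3 * δ) := by
        rw [← ENNReal.ofReal_add hδ hδ, ← ENNReal.ofReal_add hδ (by positivity)]
        ring_nf

end Projection

theorem statement4_general {X : Type*} [MetricSpace X]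
    (δ ρ R : ℝ) (hδ : 0 < δ)
    (hgeo : GeodesicMetricSpace X) (hthin : DeltaThin X δ)
    (C : Set X) (hsep : Separated C ρ)
    (hR₂ : R ≤ ρ / 2 - 3 * δ) :
    ∀ p ∈ C, ∀ a ∈ C, p ≠ a →
      (⨆ x ∈ projSet p R a, ⨆ y ∈ projSet p R a, pathDist p R x y) ≤
          ENNReal.ofReal (4 * δ) ∧
        ∀ θ : ℝ, 4 * δ ≤ θ → projDist p R a a ≤ ENNReal.ofReal θ := by
  intro p hp a ha hpa
  have hdiam : (⨆ x ∈ projSet p R a, ⨆ y ∈ projSet p R a, pathDist p R x y) ≤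
      ENNReal.ofReal (4 * δ) := by
    refine iSup₂_le fun x hx => iSup₂_le fun y hy => ?_
    have hR : 0 ≤ R := hx.1 ▸ dist_nonneg
    have hρ : ρ ≤ dist p a := hsep p hp a ha hpa
    exact (pathDist_le_of_mem_projSet hgeo hthin hδ.le (by linarith) hx hy).trans
      (ENNReal.ofReal_le_ofReal (by linarith))
  refine ⟨hdiam, fun θ hθ => ?_⟩
  rw [projDist, union_self]
  exact hdiam.trans (ENNReal.ofReal_le_ofReal hθ)

/-- For distinct `p, a ∈ C`, the projection `π_p(a)` has diameter at most `4δ` in the path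
metric of `X ∖ B_R(p)`; in particular axiom (P1) holds for the associated projection
distances with any projection constant `θ ≥ 4δ`. -/
theorem statement4 {X : Type*} [MetricSpace X]
    (δ ρ R : ℝ) (hδ : 0 < δ)
    (hgeo : GeodesicMetricSpace X) (hthin : DeltaThin X δ)
    (C : Set X) (hsep : Separated C ρ) (hρ : 20 * δ ≤ ρ)
    (hR₁ : 2 + 2 * δ ≤ R) (hR₂ : R ≤ ρ / 2 - 3 * δ) :
    ∀ p ∈ C, ∀ a ∈ C, p ≠ a →
      (⨆ x ∈ projSet p R a, ⨆ y ∈ projSet p R a, pathDist p R x y) ≤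
          ENNReal.ofReal (4 * δ) ∧
        ∀ θ : ℝ, 4 * δ ≤ θ → projDist p R a a ≤ ENNReal.ofReal θ :=
  statement4_general δ ρ R hδ hgeo hthin C hsep hR₂
end

section
/- Let X be a geodesic metric space that is δ-hyperbolic with δ > 0, let C ⊆ X be a ρ-separated subset with ρ ≥ 20δ, and fix R with 2 + 2δ ≤ R ≤ ρ/2 − 3δ. Then for any points a, b ∈ X and any c ∈ C such that some geodesic from a to b does not intersect the ball B_{R+2δ}(c), one has d_c(a,b) ≤ 4δ. -/
open Set

open scoped ENNReal

/- ---------- auxiliary lemmas ---------- -/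

/-- A Lipschitz-type bound gives a bound on variation. -/
lemma evar_le_of_lip {X : Type*} [MetricSpace X] {f : ℝ → X} {a b L : ℝ} (hL : 0 ≤ L)
    (h : ∀ s ∈ Icc a b, ∀ t ∈ Icc a b, dist (f s) (f t) ≤ L * |s - t|) :
    eVariationOn f (Icc a b) ≤ ENNReal.ofReal (L * (b - a)) := by
  apply iSup_le
  rintro ⟨n, u, hu, us⟩
  calc ∑ i ∈ Finset.range n, edist (f (u (i+1))) (f (u i))
      ≤ ∑ i ∈ Finset.range n, ENNReal.ofReal (L * (u (i+1) - u i)) := by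
        apply Finset.sum_le_sum; intro i _
        rw [edist_dist]
        apply ENNReal.ofReal_le_ofReal
        have h2 := h (u (i+1)) (us (i+1)) (u i) (us i)
        rwa [abs_of_nonneg (by linarith [hu (Nat.le_succ i)] : (0:ℝ) ≤ u (i+1) - u i)] at h2
    _ = ENNReal.ofReal (∑ i ∈ Finset.range n, L * (u (i+1) - u i)) := by
        rw [ENNReal.ofReal_sum_of_nonneg]
        intro i _; exact mul_nonneg hL (sub_nonneg.2 (hu (Nat.le_succ i)))
    _ ≤ _ := by
        apply ENNReal.ofReal_le_ofReal
        rw [← Finset.mul_sum, Finset.sum_range_sub (fun i => u i)]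
        have h1 := (us 0).1; have h2 := (us n).2
        have := hu (Nat.zero_le n)
        nlinarith

/-- distance from the basepoint along a geodesic -/
lemma geod_dist_base {X : Type*} [MetricSpace X] {σ : ℝ → X} {c a : X}
    (h : IsGeodesicFrom σ c a) {u : ℝ} (hu : u ∈ Icc (0:ℝ) (dist c a)) :
    dist (σ u) c = u := by
  obtain ⟨h0, _, hiso⟩ := h
  have := hiso u hu 0 ⟨le_rfl, dist_nonneg⟩
  rw [h0] at this
  rw [this, sub_zero, abs_of_nonneg hu.1]

/-- The key construction: the three-part path from `σ₁ R` to `σ₂ R`. -/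
lemma pathDist_le_three_delta {X : Type*} [MetricSpace X] {δ R : ℝ} (hδ : 0 < δ) (hR : 0 ≤ R)
    (hgeo : GeodesicMetricSpace X) (hthin : DeltaThin X δ)
    {c a' b' : X} {σ₁ σ₂ : ℝ → X}
    (h1 : IsGeodesicFrom σ₁ c a') (h2 : IsGeodesicFrom σ₂ c b')
    (ha : R + δ ≤ dist c a') (hb : R + δ ≤ dist c b')
    (hprod : R + δ ≤ gromovProd c a' b') :
    pathDist c R (σ₁ R) (σ₂ R) ≤ ENNReal.ofReal (3 * δ) := by
  obtain ⟨g, hg⟩ := hgeo (σ₁ (R + δ)) (σ₂ (R + δ))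
  set d : ℝ := dist (σ₁ (R + δ)) (σ₂ (R + δ)) with hd_def
  have hd0 : 0 ≤ d := dist_nonneg
  have hd : d ≤ δ := hthin c a' b' σ₁ σ₂ h1 h2 (R + δ) ⟨by linarith, hprod⟩
  set γp : ℝ → X := fun t =>
    if t ≤ 1/3 then σ₁ (R + 3*δ*t)
    else if t ≤ 2/3 then g (3*d*(t - 1/3))
    else σ₂ (R + δ - 3*δ*(t - 2/3)) with hγp
  -- piece descriptions
  have e1 : ∀ s ∈ Icc (0:ℝ) (1/3), γp s = σ₁ (R + 3*δ*s) := by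
    intro s hs; simp only [hγp]; rw [if_pos hs.2]
  have e2 : ∀ s ∈ Icc (1/3:ℝ) (2/3), γp s = g (3*d*(s - 1/3)) := by
    intro s hs; simp only [hγp]
    by_cases h13 : s ≤ 1/3
    · have hs13 : s = 1/3 := le_antisymm h13 hs.1
      rw [if_pos h13, hs13]
      have : R + 3*δ*(1/3 : ℝ) = R + δ := by ring
      rw [this]
      have : 3*d*((1/3 : ℝ) - 1/3) = 0 := by ring
      rw [this, hg.1]
    · rw [if_neg h13, if_pos hs.2]
  have e3 : ∀ s ∈ Icc (2/3:ℝ) 1, γp s = σ₂ (R + δ - 3*δ*(s - 2/3)) := by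
    intro s hs; simp only [hγp]
    by_cases h13 : s ≤ 1/3
    · exfalso; linarith [hs.1]
    by_cases h23 : s ≤ 2/3
    · have hs23 : s = 2/3 := le_antisymm h23 hs.1
      rw [if_neg h13, if_pos h23, hs23]
      have hv : 3*d*((2/3 : ℝ) - 1/3) = d := by ring
      rw [hv, hg.2.1]
      congr 1; ring
    · rw [if_neg h13, if_neg h23]
  -- geodesic parameter memberships
  have mem1 : ∀ s ∈ Icc (0:ℝ) (1/3), R + 3*δ*s ∈ Icc (0:ℝ) (dist c a') := by
    intro s hs
    constructor
    · nlinarith [hs.1]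
    · nlinarith [hs.2]
  have mem2 : ∀ s ∈ Icc (1/3:ℝ) (2/3), 3*d*(s - 1/3) ∈ Icc (0:ℝ) d := by
    intro s hs
    constructor
    · nlinarith [hs.1]
    · nlinarith [hs.2]
  have mem3 : ∀ s ∈ Icc (2/3:ℝ) 1, R + δ - 3*δ*(s - 2/3) ∈ Icc (0:ℝ) (dist c b') := by
    intro s hs
    constructor
    · nlinarith [hs.2]
    · nlinarith [hs.1]
  -- piecewise Lipschitz bounds
  have hP1 : ∀ s ∈ Icc (0:ℝ) (1/3), ∀ t ∈ Icc (0:ℝ) (1/3),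
      dist (γp s) (γp t) ≤ 3*δ*|s - t| := by
    intro s hs t ht
    rw [e1 s hs, e1 t ht, h1.2.2 _ (mem1 s hs) _ (mem1 t ht)]
    have : R + 3*δ*s - (R + 3*δ*t) = 3*δ*(s - t) := by ring
    rw [this, abs_mul, abs_of_nonneg (by linarith : (0:ℝ) ≤ 3*δ)]
  have hP2 : ∀ s ∈ Icc (1/3:ℝ) (2/3), ∀ t ∈ Icc (1/3:ℝ) (2/3),
      dist (γp s) (γp t) ≤ 3*δ*|s - t| := by
    intro s hs t ht
    rw [e2 s hs, e2 t ht, hg.2.2 _ (mem2 s hs) _ (mem2 t ht)]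
    have : 3*d*(s - 1/3) - 3*d*(t - 1/3) = 3*d*(s - t) := by ring
    rw [this, abs_mul, abs_of_nonneg (by linarith : (0:ℝ) ≤ 3*d)]
    have := abs_nonneg (s - t)
    nlinarith
  have hP3 : ∀ s ∈ Icc (2/3:ℝ) 1, ∀ t ∈ Icc (2/3:ℝ) 1,
      dist (γp s) (γp t) ≤ 3*δ*|s - t| := by
    intro s hs t ht
    rw [e3 s hs, e3 t ht, h2.2.2 _ (mem3 s hs) _ (mem3 t ht)]
    have : R + δ - 3*δ*(s - 2/3) - (R + δ - 3*δ*(t - 2/3)) = 3*δ*(t - s) := by ring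
    rw [this, abs_mul, abs_of_nonneg (by linarith : (0:ℝ) ≤ 3*δ), abs_sub_comm]
  -- global Lipschitz bound, first for s ≤ t
  have Hle : ∀ s ∈ Icc (0:ℝ) 1, ∀ t ∈ Icc (0:ℝ) 1, s ≤ t →
      dist (γp s) (γp t) ≤ 3*δ*(t - s) := by
    intro s hs t ht hst
    have habs : ∀ u v : ℝ, u ≤ v → |u - v| = v - u := by
      intro u v huv; rw [abs_sub_comm, abs_of_nonneg (by linarith)]
    by_cases ht13 : t ≤ 1/3
    · have := hP1 s ⟨hs.1, le_trans hst ht13⟩ t ⟨le_trans hs.1 hst, ht13⟩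
      rwa [habs s t hst] at this
    push_neg at ht13
    by_cases hs13 : s ≤ 1/3
    · -- s in piece 1
      have m13 : (1/3:ℝ) ∈ Icc (0:ℝ) (1/3) := by norm_num
      have m13' : (1/3:ℝ) ∈ Icc (1/3:ℝ) (2/3) := by norm_num
      have d1 := hP1 s ⟨hs.1, hs13⟩ (1/3) m13
      rw [habs s (1/3) hs13] at d1
      by_cases ht23 : t ≤ 2/3
      · have d2 := hP2 (1/3) m13' t ⟨le_of_lt ht13, ht23⟩
        rw [habs (1/3) t (le_of_lt ht13)] at d2
        calc dist (γp s) (γp t) ≤ dist (γp s) (γp (1/3)) + dist (γp (1/3)) (γp t) :=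
              dist_triangle _ _ _
          _ ≤ 3*δ*(1/3 - s) + 3*δ*(t - 1/3) := by linarith
          _ = 3*δ*(t - s) := by ring
      · push_neg at ht23
        have m23 : (2/3:ℝ) ∈ Icc (1/3:ℝ) (2/3) := by norm_num
        have m23' : (2/3:ℝ) ∈ Icc (2/3:ℝ) 1 := by norm_num
        have d2 := hP2 (1/3) m13' (2/3) m23
        have h1323 : |(1/3 : ℝ) - 2/3| = 1/3 := by norm_num
        rw [h1323] at d2
        have d3 := hP3 (2/3) m23' t ⟨le_of_lt ht23, ht.2⟩
        rw [habs (2/3) t (le_of_lt ht23)] at d3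
        calc dist (γp s) (γp t)
            ≤ dist (γp s) (γp (1/3)) + (dist (γp (1/3)) (γp (2/3)) + dist (γp (2/3)) (γp t)) := by
              have := dist_triangle (γp s) (γp (1/3)) (γp t)
              have := dist_triangle (γp (1/3)) (γp (2/3)) (γp t)
              linarith
          _ ≤ 3*δ*(1/3 - s) + (3*δ*(1/3) + 3*δ*(t - 2/3)) := by linarith
          _ = 3*δ*(t - s) := by ring
    · push_neg at hs13
      by_cases ht23 : t ≤ 2/3
      · have := hP2 s ⟨le_of_lt hs13, le_trans hst ht23⟩ t ⟨le_trans (le_of_lt hs13) hst, ht23⟩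
        rwa [habs s t hst] at this
      push_neg at ht23
      by_cases hs23 : s ≤ 2/3
      · have m23 : (2/3:ℝ) ∈ Icc (1/3:ℝ) (2/3) := by norm_num
        have m23' : (2/3:ℝ) ∈ Icc (2/3:ℝ) 1 := by norm_num
        have d2 := hP2 s ⟨le_of_lt hs13, hs23⟩ (2/3) m23
        rw [habs s (2/3) hs23] at d2
        have d3 := hP3 (2/3) m23' t ⟨le_of_lt ht23, ht.2⟩
        rw [habs (2/3) t (le_of_lt ht23)] at d3
        calc dist (γp s) (γp t) ≤ dist (γp s) (γp (2/3)) + dist (γp (2/3)) (γp t) :=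
              dist_triangle _ _ _
          _ ≤ 3*δ*(2/3 - s) + 3*δ*(t - 2/3) := by linarith
          _ = 3*δ*(t - s) := by ring
      · push_neg at hs23
        have := hP3 s ⟨le_of_lt hs23, hs.2⟩ t ⟨le_trans (le_of_lt hs23) hst, ht.2⟩
        rwa [habs s t hst] at this
  have H : ∀ s ∈ Icc (0:ℝ) 1, ∀ t ∈ Icc (0:ℝ) 1, dist (γp s) (γp t) ≤ 3*δ*|s - t| := by
    intro s hs t ht
    rcases le_total s t with h | h
    · have := Hle s hs t ht h
      rwa [abs_sub_comm, abs_of_nonneg (by linarith)]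
    · have := Hle t ht s hs h
      rw [dist_comm] at this
      rwa [abs_of_nonneg (by linarith)]
  -- continuity
  have hcont : ContinuousOn γp (Icc 0 1) := by
    apply LipschitzOnWith.continuousOn (K := Real.toNNReal (3*δ))
    apply LipschitzOnWith.of_dist_le' (K := 3*δ)
    intro x hx y hy
    have := H x hx y hy
    rwa [Real.dist_eq]
  -- endpoints
  have hstart : γp 0 = σ₁ R := by
    have := e1 0 (by norm_num)
    rw [this]; congr 1; ring
  have hend : γp 1 = σ₂ R := by
    have := e3 1 (by norm_num)
    rw [this]; congr 1; ring
  -- stays outside the ball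
  have houtside : ∀ t ∈ Icc (0:ℝ) 1, R ≤ dist (γp t) c := by
    intro t ht
    by_cases h13 : t ≤ 1/3
    · rw [e1 t ⟨ht.1, h13⟩, geod_dist_base h1 (mem1 t ⟨ht.1, h13⟩)]
      nlinarith [ht.1]
    push_neg at h13
    by_cases h23 : t ≤ 2/3
    · rw [e2 t ⟨le_of_lt h13, h23⟩]
      set u := 3*d*(t - 1/3) with hu_def
      have hu : u ∈ Icc (0:ℝ) d := mem2 t ⟨le_of_lt h13, h23⟩
      have hgu : dist (g u) (g 0) = u := by
        rw [hg.2.2 u hu 0 ⟨le_rfl, hd0⟩, sub_zero, abs_of_nonneg hu.1]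
      have hg0 : dist (g 0) c = R + δ := by
        rw [hg.1, geod_dist_base h1 ⟨by linarith, ha⟩]
      have := dist_triangle (g 0) (g u) c
      rw [dist_comm (g 0) (g u)] at this
      have hud : u ≤ d := hu.2
      linarith
    · push_neg at h23
      rw [e3 t ⟨le_of_lt h23, ht.2⟩, geod_dist_base h2 (mem3 t ⟨le_of_lt h23, ht.2⟩)]
      nlinarith [ht.2]
  -- conclude
  have hmem : γp ∈ {γ : ℝ → X | ContinuousOn γ (Icc 0 1) ∧ γ 0 = σ₁ R ∧ γ 1 = σ₂ R ∧
      ∀ t ∈ Icc (0:ℝ) 1, R ≤ dist (γ t) c} := ⟨hcont, hstart, hend, houtside⟩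
  calc pathDist c R (σ₁ R) (σ₂ R) ≤ eVariationOn γp (Icc 0 1) := iInf₂_le γp hmem
    _ ≤ ENNReal.ofReal (3*δ*(1 - 0)) := evar_le_of_lip (by linarith) H
    _ = ENNReal.ofReal (3*δ) := by norm_num

/-- If some geodesic from `a` to `b` does not meet the ball `B_{R+2δ}(c)` for `c ∈ C`, then
`d_c(a,b) ≤ 4δ`. -/
theorem statement5 {X : Type*} [MetricSpace X]
    (δ ρ R : ℝ) (hδ : 0 < δ)
    (hgeo : GeodesicMetricSpace X) (hthin : DeltaThin X δ)
    (C : Set X) (hsep : Separated C ρ) (hρ : 20 * δ ≤ ρ)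
    (hR₁ : 2 + 2 * δ ≤ R) (hR₂ : R ≤ ρ / 2 - 3 * δ) :
    ∀ a b : X, ∀ c ∈ C,
      (∃ γ : ℝ → X, IsGeodesicFrom γ a b ∧
        ∀ t ∈ Icc (0:ℝ) (dist a b), R + 2 * δ ≤ dist (γ t) c) →
      projDist c R a b ≤ ENNReal.ofReal (4 * δ) := by
  intro a b c _ ⟨γab, hab, havoid⟩
  have hR0 : 0 ≤ R := by linarith
  -- distances from c to a and b
  have hca : R + 2*δ ≤ dist c a := by
    have := havoid 0 ⟨le_rfl, dist_nonneg⟩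
    rw [hab.1] at this
    rwa [dist_comm] at this
  have hcb : R + 2*δ ≤ dist c b := by
    have := havoid (dist a b) ⟨dist_nonneg, le_rfl⟩
    rw [hab.2.1] at this
    rwa [dist_comm] at this
  -- Gromov product bound
  have hgp : R + δ ≤ gromovProd c a b := by
    obtain ⟨γac, hac⟩ := hgeo a c
    set m := gromovProd a b c with hm_def
    have hm0 : 0 ≤ m := by
      have := dist_triangle b a c
      rw [dist_comm b a] at this
      simp only [hm_def, gromovProd]; linarith
    have hmab : m ≤ dist a b := by
      have := dist_triangle a c b
      rw [dist_comm c b] at this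
      have h1 := dist_triangle a b c
      simp only [hm_def, gromovProd]; linarith
    have hmac : m ≤ dist a c := by
      have h1 := dist_triangle a b c
      have h2 := dist_triangle a c b
      rw [dist_comm c b] at h2
      simp only [hm_def, gromovProd]; linarith
    have hthin' := hthin a b c γab γac hab hac m ⟨hm0, le_rfl⟩
    have hend : dist (γac m) c = dist a c - m := by
      have := hac.2.2 m ⟨hm0, hmac⟩ (dist a c) ⟨dist_nonneg, le_rfl⟩
      rw [hac.2.1] at this
      rw [this, abs_of_nonpos (by linarith), neg_sub]
    have hav := havoid m ⟨hm0, hmab⟩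
    have htri := dist_triangle (γab m) (γac m) c
    have : dist a c - m = gromovProd c a b := by
      simp only [hm_def, gromovProd]
      rw [dist_comm c a, dist_comm c b]
      ring
    rw [hend, this] at htri
    linarith
  -- key bound for each pair of projection points
  have key : ∀ x ∈ projSet c R a ∪ projSet c R b, ∀ y ∈ projSet c R a ∪ projSet c R b,
      pathDist c R x y ≤ ENNReal.ofReal (3 * δ) := by
    have extract : ∀ u : X, R + 2*δ ≤ dist c u → ∀ x ∈ projSet c R u,
        ∃ σ : ℝ → X, IsGeodesicFrom σ c u ∧ x = σ R := by
      intro u hcu x ⟨hxc, σ, hσ, t, ht, hσt⟩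
      refine ⟨σ, hσ, ?_⟩
      have : dist (σ t) c = t := geod_dist_base hσ ht
      rw [hσt, hxc] at this
      rw [← hσt, this]
    intro x hx y hy
    have hgpaa : R + δ ≤ gromovProd c a a := by
      simp only [gromovProd, dist_self]; linarith
    have hgpbb : R + δ ≤ gromovProd c b b := by
      simp only [gromovProd, dist_self]; linarith
    have hgpba : R + δ ≤ gromovProd c b a := by
      simp only [gromovProd] at hgp ⊢
      rw [dist_comm b a]; linarith
    rcases hx with hx | hx <;> rcases hy with hy | hy
    · obtain ⟨σ₁, hσ₁, rfl⟩ := extract a hca x hx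
      obtain ⟨σ₂, hσ₂, rfl⟩ := extract a hca y hy
      exact pathDist_le_three_delta hδ hR0 hgeo hthin hσ₁ hσ₂ (by linarith) (by linarith) hgpaa
    · obtain ⟨σ₁, hσ₁, rfl⟩ := extract a hca x hx
      obtain ⟨σ₂, hσ₂, rfl⟩ := extract b hcb y hy
      exact pathDist_le_three_delta hδ hR0 hgeo hthin hσ₁ hσ₂ (by linarith) (by linarith) hgp
    · obtain ⟨σ₁, hσ₁, rfl⟩ := extract b hcb x hx
      obtain ⟨σ₂, hσ₂, rfl⟩ := extract a hca y hy
      exact pathDist_le_three_delta hδ hR0 hgeo hthin hσ₁ hσ₂ (by linarith) (by linarith) hgpba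
    · obtain ⟨σ₁, hσ₁, rfl⟩ := extract b hcb x hx
      obtain ⟨σ₂, hσ₂, rfl⟩ := extract b hcb y hy
      exact pathDist_le_three_delta hδ hR0 hgeo hthin hσ₁ hσ₂ (by linarith) (by linarith) hgpbb
  -- conclude
  refine iSup₂_le fun x hx => iSup₂_le fun y hy => ?_
  exact le_trans (key x hx y hy) (ENNReal.ofReal_le_ofReal (by linarith))
end

section
/- Let G be a group acting by isometries on a geodesic metric space X that is δ-hyperbolic with δ > 0, let 𝒞 = (C, {G_c}_{c∈C}) be a ρ-separated fairly rotating family with ρ ≥ 20δ, and fix R with 2 + 2δ ≤ R ≤ ρ/2 − 3δ. Then for all distinct a, b ∈ C and every nontrivial g ∈ G_a, the projection distance satisfies d_a(b, gb) ≥ 2^{(R−2)/δ} − 4 − 6δ. -/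
/-!
Fair rotation bounds the Gromov product `(b, g b)_a` by `1`, so the geodesics from `a` to `b`
and to `g b` are at least `2r - 2` apart at distance `r` from `a`. A path from `π_a(b)` to
`π_a(g b)` avoiding `B_R(a)` is cut into a chain of `m + 1` steps of size at most
`h = 2δ / log 2` with `m h` bounded by its length. Thin triangles show, by induction on `k`,
that geodesics from `a` to chain points `2^k` apart are `δ`-close at depth `h / 2 + k δ` below
the sphere: two `δ`-close pairs give a `2δ`-close pair, which is `δ`-close one step `δ` further
in. Against the divergence `2r - 2` this forces `2^k ≳ 2^(R/δ)` for `2^k ≤ m`, and the choice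
of `h` turns the constants into `2^((R-2)/δ)` through `1 - x⁻¹ ≤ log x`.
-/

open Set

/-- A rotating family: a `G`-invariant set of apices `C` together with subgroups `G_c`
fixing `c` and compatible with conjugation. -/
structure RotatingFamily {X G : Type*} [MetricSpace X] [Group G] [MulAction G X]
    (C : Set X) (Gc : X → Subgroup G) : Prop where
  invariant : ∀ (g : G), ∀ c ∈ C, g • c ∈ C
  fixes : ∀ c ∈ C, ∀ g ∈ Gc c, g • c = c
  conj : ∀ (g : G), ∀ c ∈ C, Gc (g • c) = Subgroup.map (MulAut.conj g).toMonoidHom (Gc c)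

/-- The family is fairly rotating: for each apex `c`, nontrivial `g ∈ G_c` and apex `x ≠ c`,
some geodesic from `x` to `g • x` meets the closed ball of radius `1` around `c`. -/
def FairlyRotating {X G : Type*} [MetricSpace X] [Group G] [MulAction G X]
    (C : Set X) (Gc : X → Subgroup G) : Prop :=
  ∀ c ∈ C, ∀ g ∈ Gc c, g ≠ 1 → ∀ x ∈ C, x ≠ c →
    ∃ γ : ℝ → X, IsGeodesicFrom γ x (g • x) ∧
      ∃ t ∈ Icc (0:ℝ) (dist x (g • x)), dist (γ t) c ≤ 1

open scoped ENNReal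

open Real

namespace IsGeodesicFrom

variable {X : Type*} [MetricSpace X] {γ : ℝ → X} {x y : X} {s : ℝ}

lemma dist_apply_left (hγ : IsGeodesicFrom γ x y) (hs : s ∈ Icc 0 (dist x y)) :
    dist (γ s) x = s := by
  have h := hγ.2.2 s hs 0 ⟨le_rfl, dist_nonneg⟩
  rwa [hγ.1, sub_zero, abs_of_nonneg hs.1] at h

lemma dist_apply_right (hγ : IsGeodesicFrom γ x y) (hs : s ∈ Icc 0 (dist x y)) :
    dist (γ s) y = dist x y - s := by
  have h := hγ.2.2 s hs (dist x y) ⟨dist_nonneg, le_rfl⟩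
  rwa [hγ.2.1, abs_sub_comm, abs_of_nonneg (sub_nonneg.2 hs.2)] at h

lemma restrict (hγ : IsGeodesicFrom γ x y) (hs : s ∈ Icc 0 (dist x y)) :
    IsGeodesicFrom γ x (γ s) := by
  have hd : dist x (γ s) = s := by rw [dist_comm, hγ.dist_apply_left hs]
  refine ⟨hγ.1, by rw [hd], fun u hu v hv => ?_⟩
  rw [hd] at hu hv
  exact hγ.2.2 u ⟨hu.1, hu.2.trans hs.2⟩ v ⟨hv.1, hv.2.trans hs.2⟩

lemma gromovProd_le_dist (hγ : IsGeodesicFrom γ x y) (hs : s ∈ Icc 0 (dist x y)) (a : X) :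
    gromovProd a x y ≤ dist a (γ s) := by
  have h₁ := hγ.dist_apply_left hs
  have h₂ := hγ.dist_apply_right hs
  unfold gromovProd
  linarith [dist_triangle a (γ s) x, dist_triangle a (γ s) y]

lemma two_mul_sub_gromovProd_le_dist {a b c : X} {γ₁ γ₂ : ℝ → X} (h₁ : IsGeodesicFrom γ₁ a b)
    (h₂ : IsGeodesicFrom γ₂ a c) {r : ℝ} (hr : 0 ≤ r) (hb : r ≤ dist a b) (hc : r ≤ dist a c) :
    2 * (r - gromovProd a b c) ≤ dist (γ₁ r) (γ₂ r) := by
  have hb' := h₁.dist_apply_right ⟨hr, hb⟩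
  have hc' := h₂.dist_apply_right ⟨hr, hc⟩
  unfold gromovProd
  linarith [dist_triangle4 b (γ₁ r) (γ₂ r) c, dist_comm b (γ₁ r)]

end IsGeodesicFrom

section Chain

variable {X : Type*} [MetricSpace X]

def IsChainAlong (γ : ℝ → X) (s t h : ℝ) (m : ℕ) (z : ℕ → X) : Prop :=
  z 0 = γ s ∧ z (m + 1) = γ t ∧ (∀ i ≤ m + 1, z i ∈ γ '' Icc s t) ∧
    ∀ i < m + 1, dist (z i) (z (i + 1)) ≤ h

variable {γ : ℝ → X} {s t h : ℝ}

lemma isChainAlong_pair (hst : s ≤ t) (hd : dist (γ s) (γ t) ≤ h) :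
    IsChainAlong γ s t h 0 (fun i => if i = 0 then γ s else γ t) := by
  refine ⟨rfl, rfl, fun i _ => ?_, fun i hi => ?_⟩
  · dsimp only
    split_ifs
    exacts [mem_image_of_mem γ (left_mem_Icc.2 hst), mem_image_of_mem γ (right_mem_Icc.2 hst)]
  · obtain rfl : i = 0 := by omega
    simpa using hd

lemma IsChainAlong.cons {v : ℝ} {m : ℕ} {z : ℕ → X} (hz : IsChainAlong γ v t h m z)
    (hsv : s ≤ v) (hvt : v ≤ t) (hd : dist (γ s) (γ v) ≤ h) :
    IsChainAlong γ s t h (m + 1) (fun i => if i = 0 then γ s else z (i - 1)) := by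
  obtain ⟨hz0, hzm, hzγ, hgap⟩ := hz
  refine ⟨by simp, by simpa using hzm, fun i hi => ?_, fun i hi => ?_⟩
  · dsimp only
    split_ifs
    · exact mem_image_of_mem γ (left_mem_Icc.2 (hsv.trans hvt))
    · exact image_mono (Icc_subset_Icc_left hsv) (hzγ _ (by omega))
  · rcases i with _ | i
    · simpa [hz0] using hd
    · simpa using hgap i (by omega)

lemma exists_isChainAlong_of_eVariationOn_le (hh : 0 < h) (n : ℕ) :
    ∀ {s : ℝ}, s ≤ t → ContinuousOn γ (Icc s t) →
      eVariationOn γ (Icc s t) ≤ ENNReal.ofReal (n * h) →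
      ∃ m z, IsChainAlong γ s t h m z ∧ ENNReal.ofReal (m * h) ≤ eVariationOn γ (Icc s t) := by
  have hsucc (n : ℕ) :
      ENNReal.ofReal ((n + 1 : ℕ) * h) = ENNReal.ofReal h + ENNReal.ofReal (n * h) := by
    rw [← ENNReal.ofReal_add hh.le (by positivity)]
    push_cast
    ring_nf
  induction n with
  | zero =>
    intro s hst _ hvar
    have h0 : edist (γ s) (γ t) ≤ 0 := by
      simpa using (eVariationOn.edist_le γ (left_mem_Icc.2 hst) (right_mem_Icc.2 hst)).trans hvar
    refine ⟨0, _, isChainAlong_pair hst ?_, by simp⟩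
    rw [edist_le_zero.1 h0, dist_self]
    exact hh.le
  | succ n ih =>
    intro s hst hγ hvar
    by_cases hclose : dist (γ s) (γ t) ≤ h
    · exact ⟨0, _, isChainAlong_pair hst hclose, by simp⟩
    -- greedy step: a first step of size exactly `h` uses up variation at least `h`
    obtain ⟨v, hv, hvh⟩ : ∃ v ∈ Icc s t, dist (γ s) (γ v) = h :=
      intermediate_value_Icc hst ((continuous_const.dist continuous_id).comp_continuousOn hγ :
        ContinuousOn (fun v => dist (γ s) (γ v)) _)
        ⟨by simpa using hh.le, (not_le.1 hclose).le⟩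
    have hsplit : eVariationOn γ (Icc s v) + eVariationOn γ (Icc v t) =
        eVariationOn γ (Icc s t) := by
      simpa using eVariationOn.Icc_add_Icc γ hv.1 hv.2 (mem_univ v)
    have hfirst : ENNReal.ofReal h ≤ eVariationOn γ (Icc s v) := by
      rw [← hvh, ← edist_dist]
      exact eVariationOn.edist_le γ (left_mem_Icc.2 hv.1) (right_mem_Icc.2 hv.1)
    have hrest : eVariationOn γ (Icc v t) ≤ ENNReal.ofReal (n * h) := by
      refine (ENNReal.add_le_add_iff_left (ENNReal.ofReal_ne_top (r := h))).1 ?_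
      calc ENNReal.ofReal h + eVariationOn γ (Icc v t)
          ≤ eVariationOn γ (Icc s t) := hsplit ▸ add_le_add_left hfirst _
        _ ≤ _ := hvar.trans (hsucc n).le
    obtain ⟨m, z, hz, hvar'⟩ := ih hv.2 (hγ.mono (Icc_subset_Icc_left hv.1)) hrest
    refine ⟨m + 1, _, hz.cons hv.1 hv.2 hvh.le, ?_⟩
    rw [hsucc, ← hsplit]
    exact add_le_add hfirst hvar'

lemma exists_isChainAlong_of_eVariationOn_ne_top (hst : s ≤ t) (hγ : ContinuousOn γ (Icc s t))
    (hvar : eVariationOn γ (Icc s t) ≠ ⊤) (hh : 0 < h) :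
    ∃ m z, IsChainAlong γ s t h m z ∧ ENNReal.ofReal (m * h) ≤ eVariationOn γ (Icc s t) := by
  obtain ⟨n, hn⟩ := exists_nat_ge ((eVariationOn γ (Icc s t)).toReal / h)
  refine exists_isChainAlong_of_eVariationOn_le hh n hst hγ ?_
  rw [← ENNReal.ofReal_toReal hvar]
  exact ENNReal.ofReal_le_ofReal ((div_le_iff₀ hh).1 hn)

end Chain

lemma two_rpow_le_two_pow_mul {δ R : ℝ} (hδ : 0 < δ) {k : ℕ}
    (hk : R - 1 - δ - δ / log 2 ≤ k * δ) :
    (2:ℝ) ^ ((R - 2) / δ) ≤ 2 ^ k * (2 * δ / log 2) := by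
  have hlog : 0 < log 2 := log_pos one_lt_two
  set u := δ / log 2 with hu
  have hupos : 0 < u := div_pos hδ hlog
  have hexp : (R - 2) / δ - (k + 1) ≤ (u - 1) / δ := by
    rw [sub_le_iff_le_add, div_add' _ _ _ hδ.ne', div_le_div_iff_of_pos_right hδ]
    linarith
  have hu₁ : (2:ℝ) ^ ((u - 1) / δ) ≤ u := by
    calc (2:ℝ) ^ ((u - 1) / δ) = exp (1 - u⁻¹) := by
          rw [rpow_def_of_pos two_pos, hu]; congr 1; field_simp
      _ ≤ exp (log u) := exp_le_exp.2 (one_sub_inv_le_log_of_pos hupos)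
      _ = u := exp_log hupos
  calc (2:ℝ) ^ ((R - 2) / δ) = 2 ^ ((R - 2) / δ - (k + 1)) * 2 ^ ((k : ℝ) + 1) := by
        rw [← rpow_add two_pos]; ring_nf
    _ ≤ u * 2 ^ ((k : ℝ) + 1) := by
        gcongr
        exact (rpow_le_rpow_of_exponent_le one_le_two hexp).trans hu₁
    _ = 2 ^ k * (2 * δ / log 2) := by
        rw [rpow_add_one two_ne_zero, rpow_natCast]; ring

namespace DeltaThin

variable {X : Type*} [MetricSpace X] {δ : ℝ} (hthin : DeltaThin X δ) {a p q : X}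
  {γ₁ γ₂ : ℝ → X} {r : ℝ}
include hthin

lemma dist_apply_le (h₁ : IsGeodesicFrom γ₁ a p) (h₂ : IsGeodesicFrom γ₂ a q) (hr : 0 ≤ r)
    (hpq : 2 * r + dist p q ≤ dist a p + dist a q) : dist (γ₁ r) (γ₂ r) ≤ δ :=
  hthin a p q γ₁ γ₂ h₁ h₂ r ⟨hr, by unfold gromovProd; linarith⟩

lemma dist_apply_le_of_dist_apply_add_le (hδ : 0 ≤ δ) (h₁ : IsGeodesicFrom γ₁ a p)
    (h₂ : IsGeodesicFrom γ₂ a q) (hr : 0 ≤ r) (hp : r + δ ≤ dist a p) (hq : r + δ ≤ dist a q)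
    (hd : dist (γ₁ (r + δ)) (γ₂ (r + δ)) ≤ 2 * δ) : dist (γ₁ r) (γ₂ r) ≤ δ := by
  have hp' : r + δ ∈ Icc 0 (dist a p) := ⟨by linarith, hp⟩
  have hq' : r + δ ∈ Icc 0 (dist a q) := ⟨by linarith, hq⟩
  refine hthin.dist_apply_le (h₁.restrict hp') (h₂.restrict hq') hr ?_
  rw [dist_comm a, dist_comm a, h₁.dist_apply_left hp', h₂.dist_apply_left hq']
  linarith

theorem dist_apply_le_of_chain (hδ : 0 ≤ δ) (hgeo : GeodesicMetricSpace X) {R h : ℝ}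
    (hh : 0 ≤ h) {m : ℕ} {z : ℕ → X} (hz : ∀ i ≤ m, R ≤ dist a (z i))
    (hgap : ∀ i < m, dist (z i) (z (i + 1)) ≤ h) (k : ℕ) :
    ∀ {i j : ℕ}, i ≤ j → j ≤ m → j ≤ i + 2 ^ k →
      ∀ {γ₁ γ₂ : ℝ → X}, IsGeodesicFrom γ₁ a (z i) → IsGeodesicFrom γ₂ a (z j) →
        ∀ {r : ℝ}, 0 ≤ r → r + h / 2 + k * δ ≤ R → dist (γ₁ r) (γ₂ r) ≤ δ := by
  induction k with
  | zero =>
    intro i j hij hjm hji γ₁ γ₂ h₁ h₂ r hr hrR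
    have hzij : dist (z i) (z j) ≤ h := by
      rcases (show j = i ∨ j = i + 1 by omega) with rfl | rfl
      · simpa using hh
      · exact hgap i (by omega)
    refine hthin.dist_apply_le h₁ h₂ hr ?_
    push_cast at hrR
    linarith [hz i (by omega), hz j hjm]
  | succ k ih =>
    intro i j hij hjm hji γ₁ γ₂ h₁ h₂ r hr hrR
    have hpow : 2 ^ (k + 1) = 2 ^ k + 2 ^ k := by ring
    obtain ⟨μ, hμ⟩ := hgeo a (z (min j (i + 2 ^ k)))
    have hrR' : r + δ + h / 2 + k * δ ≤ R := by push_cast at hrR; linarith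
    have hr' : 0 ≤ r + δ := by linarith
    have hrδR : r + δ ≤ R := by linarith [show 0 ≤ h / 2 + k * δ by positivity]
    have d₁ := ih (by omega) (by omega) (by omega) h₁ hμ hr' hrR'
    have d₂ := ih (min_le_left _ _) hjm (by omega) hμ h₂ hr' hrR'
    refine hthin.dist_apply_le_of_dist_apply_add_le hδ h₁ h₂ hr ?_ ?_ ?_
    · exact hrδR.trans (hz i (by omega))
    · exact hrδR.trans (hz j hjm)
    · linarith [dist_triangle (γ₁ (r + δ)) (μ (r + δ)) (γ₂ (r + δ))]

theorem two_rpow_le_of_chain (hδ : 0 < δ) (hgeo : GeodesicMetricSpace X) {b c : X}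
    (h₁ : IsGeodesicFrom γ₁ a b) (h₂ : IsGeodesicFrom γ₂ a c) (hgp : gromovProd a b c ≤ 1)
    {R : ℝ} (hR : 2 + 2 * δ ≤ R) (hb : R ≤ dist a b) (hc : R ≤ dist a c) {m : ℕ} {z : ℕ → X}
    (hz0 : z 0 = γ₁ R) (hzm : z (m + 1) = γ₂ R) (hz : ∀ i ≤ m + 1, R ≤ dist a (z i))
    (hgap : ∀ i < m + 1, dist (z i) (z (i + 1)) ≤ 2 * δ / log 2) :
    (2:ℝ) ^ ((R - 2) / δ) ≤ m * (2 * δ / log 2) := by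
  set h := 2 * δ / log 2 with hh
  have hlog : 2 / 3 < log 2 := by linarith [log_two_gt_d9]
  have hh₀ : 0 < h := div_pos (by linarith) (by linarith)
  have hh₃ : h < 3 * δ := by rw [hh, div_lt_iff₀ (by linarith)]; nlinarith
  have hhalf : h / 2 = δ / log 2 := by rw [hh]; ring
  have g₁ : IsGeodesicFrom γ₁ a (z 0) := hz0 ▸ h₁.restrict ⟨by linarith, hb⟩
  have g₂ : IsGeodesicFrom γ₂ a (z (m + 1)) := hzm ▸ h₂.restrict ⟨by linarith, hc⟩
  have descent := hthin.dist_apply_le_of_chain hδ.le hgeo hh₀.le hz hgap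
  have diverge : ∀ r, 0 ≤ r → r ≤ R → 2 * r - 2 ≤ dist (γ₁ r) (γ₂ r) := fun r hr hrR => by
    linarith [h₁.two_mul_sub_gromovProd_le_dist h₂ hr (hrR.trans hb) (hrR.trans hc)]
  rcases Nat.eq_zero_or_pos m with rfl | hm
  · have hclose := descent 0 (i := 0) (j := 1) zero_le_one le_rfl (by norm_num) g₁ g₂
      (r := R - h / 2) (by linarith) (by simp)
    linarith [diverge (R - h / 2) (by linarith) (by linarith)]
  set k := Nat.log 2 m
  have hk₁ : 2 ^ k ≤ m := Nat.pow_log_le_self 2 hm.ne'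
  have hk₂ : m < 2 ^ (k + 1) := Nat.lt_pow_succ_log_self one_lt_two m
  have hpow : 2 ^ (k + 1) = 2 ^ k + 2 ^ k := by ring
  -- at depth `r` the radii are `2δ`-close through the midpoint `z (2 ^ k)`, yet `2r - 2` apart
  have hkδ : R - 1 - δ - δ / log 2 ≤ k * δ := by
    by_contra! hlt
    set r := R - h / 2 - k * δ with hr
    have hr₀ : 0 ≤ r := by linarith
    have hrR : r + h / 2 + k * δ ≤ R := by linarith
    obtain ⟨μ, hμ⟩ := hgeo a (z (2 ^ k))
    have d₁ := descent k (Nat.zero_le _) (by omega) (by omega) g₁ hμ hr₀ hrR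
    have d₂ := descent k (hk₁.trans m.le_succ) le_rfl (by omega) hμ g₂ hr₀ hrR
    linarith [diverge r hr₀ (by linarith [show 0 ≤ k * δ by positivity]),
      dist_triangle (γ₁ r) (μ r) (γ₂ r)]
  calc (2:ℝ) ^ ((R - 2) / δ) ≤ 2 ^ k * h := two_rpow_le_two_pow_mul hδ hkδ
    _ ≤ m * h := by gcongr; exact_mod_cast hk₁

theorem two_rpow_le_eVariationOn (hδ : 0 < δ) (hgeo : GeodesicMetricSpace X) {b c : X}
    (h₁ : IsGeodesicFrom γ₁ a b) (h₂ : IsGeodesicFrom γ₂ a c) (hgp : gromovProd a b c ≤ 1)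
    {R : ℝ} (hR : 2 + 2 * δ ≤ R) (hb : R ≤ dist a b) (hc : R ≤ dist a c) {p : ℝ → X}
    (hp : ContinuousOn p (Icc 0 1)) (hp0 : p 0 = γ₁ R) (hp1 : p 1 = γ₂ R)
    (hpR : ∀ t ∈ Icc (0:ℝ) 1, R ≤ dist (p t) a) :
    ENNReal.ofReal (2 ^ ((R - 2) / δ)) ≤ eVariationOn p (Icc 0 1) := by
  rcases eq_or_ne (eVariationOn p (Icc 0 1)) ⊤ with htop | htop
  · simp [htop]
  obtain ⟨m, z, ⟨hz0, hzm, hzp, hgap⟩, hvar⟩ :=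
    exists_isChainAlong_of_eVariationOn_ne_top zero_le_one hp htop
      (div_pos (by linarith) (log_pos one_lt_two) : 0 < 2 * δ / log 2)
  have hz : ∀ i ≤ m + 1, R ≤ dist a (z i) := fun i hi => by
    obtain ⟨t, ht, hzt⟩ := hzp i hi
    rw [← hzt, dist_comm]
    exact hpR t ht
  exact (ENNReal.ofReal_le_ofReal (hthin.two_rpow_le_of_chain hδ hgeo h₁ h₂ hgp hR hb hc
    (hz0.trans hp0) (hzm.trans hp1) hz hgap)).trans hvar

end DeltaThin

theorem statement8_general {X G : Type*} [MetricSpace X] [Group G] [MulAction G X]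
    (hiso : ∀ g : G, Isometry (fun x : X => g • x))
    (δ ρ R : ℝ) (hδ : 0 < δ)
    (hgeo : GeodesicMetricSpace X) (hthin : DeltaThin X δ)
    (C : Set X) (Gc : X → Subgroup G)
    (hrot : RotatingFamily C Gc) (hsep : Separated C ρ) (hfair : FairlyRotating C Gc)
    (hR₁ : 2 + 2 * δ ≤ R) (hR₂ : R ≤ ρ / 2 - 3 * δ) :
    ∀ a ∈ C, ∀ b ∈ C, a ≠ b → ∀ g ∈ Gc a, g ≠ 1 →
      ENNReal.ofReal ((2:ℝ) ^ ((R - 2) / δ) - 4 - 6 * δ) ≤ projDist a R b (g • b) := by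
  intro a ha b hb hab g hg hg1
  have hRb : R ≤ dist a b := by linarith [hsep a ha b hb hab]
  have hgb : dist a (g • b) = dist a b := by
    conv_lhs => rw [← hrot.fixes a ha g hg]
    exact (hiso g).dist_eq a b
  have hgp : gromovProd a b (g • b) ≤ 1 := by
    obtain ⟨σ, hσ, t, ht, hσa⟩ := hfair a ha g hg hg1 b hb (Ne.symm hab)
    exact (hσ.gromovProd_le_dist ht a).trans (by rwa [dist_comm])
  obtain ⟨γ₁, h₁⟩ := hgeo a b
  obtain ⟨γ₂, h₂⟩ := hgeo a (g • b)
  have hR₀ : R ∈ Icc 0 (dist a b) := ⟨by linarith, hRb⟩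
  have hx : γ₁ R ∈ projSet a R b := ⟨h₁.dist_apply_left hR₀, γ₁, h₁, R, hR₀, rfl⟩
  have hy : γ₂ R ∈ projSet a R (g • b) :=
    ⟨h₂.dist_apply_left (hgb ▸ hR₀), γ₂, h₂, R, hgb ▸ hR₀, rfl⟩
  refine le_iSup₂_of_le (γ₁ R) (mem_union_left _ hx) <|
    le_iSup₂_of_le (γ₂ R) (mem_union_right _ hy) <| le_iInf₂ fun p ⟨hp, hp0, hp1, hpR⟩ => ?_
  exact (ENNReal.ofReal_le_ofReal (by linarith)).trans
    (hthin.two_rpow_le_eVariationOn hδ hgeo h₁ h₂ hgp hR₁ hRb (hgb ▸ hRb) hp hp0 hp1 hpR)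

/-- **The spinning estimate**: for a `ρ`-separated fairly rotating family, distinct apices
`a, b ∈ C` and nontrivial `g ∈ G_a`, the projection distance satisfies
`d_a(b, g·b) ≥ 2^((R−2)/δ) − 4 − 6δ`. -/
theorem statement8 {X G : Type*} [MetricSpace X] [Group G] [MulAction G X]
    (hiso : ∀ g : G, Isometry (fun x : X => g • x))
    (δ ρ R : ℝ) (hδ : 0 < δ)
    (hgeo : GeodesicMetricSpace X) (hthin : DeltaThin X δ)
    (C : Set X) (Gc : X → Subgroup G)
    (hrot : RotatingFamily C Gc) (hsep : Separated C ρ) (hfair : FairlyRotating C Gc)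
    (hρ : 20 * δ ≤ ρ) (hR₁ : 2 + 2 * δ ≤ R) (hR₂ : R ≤ ρ / 2 - 3 * δ) :
    ∀ a ∈ C, ∀ b ∈ C, a ≠ b → ∀ g ∈ Gc a, g ≠ 1 →
      ENNReal.ofReal ((2:ℝ) ^ ((R - 2) / δ) - 4 - 6 * δ) ≤ projDist a R b (g • b) :=
  statement8_general hiso δ ρ R hδ hgeo hthin C Gc hrot hsep hfair hR₁ hR₂
end
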